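/- arXiv:2507.14009 — 4 statements merged into one kernel-verified Lean document; each statement's English description precedes it below -/
import Mathlib

section
/- Let G be a group, g ∈ [G,G], and φ a homogeneous quasimorphism on G with defect D(φ). Then |φ(g)| ≤ 2·D(φ)·scl_G(g), where scl_G(g) = lim_n cl_G(g^n)/n and cl_G denotes commutator length. (Easy direction of Bavard duality.) -/
/-!
Homogeneous quasimorphisms are conjugation invariant: `φ (x yⁿ x⁻¹) = n φ (x y x⁻¹)` differs
from `φ (yⁿ) = n φ y` by at most `2D` for every `n`. Hence `φ` is bounded by `D` on commutators,
and by `2kD` on products of `k` commutators. Applied to `gⁿ`, this gives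
`n |φ g| ≤ 2 D cl(gⁿ)`; divide by `n` and let `n → ∞`.
-/

open Filter Topology
open scoped commutatorElement

/-- The set of lengths of expressions of `g` as a product of commutators. -/
def clSet {G : Type*} [Group G] (g : G) : Set ℕ :=
  {n | ∃ l : List (G × G), l.length = n ∧ (l.map fun p => ⁅p.1, p.2⁆).prod = g}

/-- The commutator length of `g` (junk value if `g ∉ [G,G]`). -/
noncomputable def cl {G : Type*} [Group G] (g : G) : ℕ := sInf (clSet g)

def IsQuasimorphism {G : Type*} [Group G] (φ : G → ℝ) (D : ℝ) : Prop :=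
  ∀ x y : G, |φ x + φ y - φ (x * y)| ≤ D

def IsHomogeneous {G : Type*} [Group G] (φ : G → ℝ) : Prop :=
  ∀ (x : G) (n : ℤ), φ (x ^ n) = n * φ x

section

variable {G : Type*} [Group G] {φ : G → ℝ} {D : ℝ}

namespace IsHomogeneous

theorem map_one (hφ : IsHomogeneous φ) : φ 1 = 0 := by
  simpa using hφ 1 0

theorem map_inv (hφ : IsHomogeneous φ) (x : G) : φ x⁻¹ = -φ x := by
  simpa using hφ x (-1)

theorem map_pow (hφ : IsHomogeneous φ) (x : G) (n : ℕ) : φ (x ^ n) = n * φ x := by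
  simpa using hφ x n

end IsHomogeneous

namespace IsQuasimorphism

theorem abs_map_mul_le (hφ : IsQuasimorphism φ D) (x y : G) :
    |φ (x * y)| ≤ |φ x| + |φ y| + D := by
  have h := abs_le.mp (hφ x y)
  rw [abs_le]
  constructor <;> linarith [le_abs_self (φ x), neg_abs_le (φ x), le_abs_self (φ y),
    neg_abs_le (φ y)]

theorem abs_map_conj_sub_le (hφ : IsQuasimorphism φ D) (hinv : ∀ x, φ x⁻¹ = -φ x) (x y : G) :
    |φ (x * y * x⁻¹) - φ y| ≤ 2 * D := by
  have h₁ := abs_le.mp (hφ x (y * x⁻¹))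
  have h₂ := abs_le.mp (hφ y x⁻¹)
  rw [hinv] at h₂
  rw [mul_assoc, abs_le]
  constructor <;> linarith

theorem map_conj (hφ : IsQuasimorphism φ D) (hhom : IsHomogeneous φ) (x y : G) :
    φ (x * y * x⁻¹) = φ y := by
  have hbound (n : ℕ) : n * |φ (x * y * x⁻¹) - φ y| ≤ 2 * D := by
    have h := hφ.abs_map_conj_sub_le hhom.map_inv x (y ^ n)
    rwa [← conj_pow, hhom.map_pow, hhom.map_pow, ← mul_sub, abs_mul, Nat.abs_cast] at h
  by_contra hne
  have hpos : 0 < |φ (x * y * x⁻¹) - φ y| := abs_pos.mpr (sub_ne_zero.mpr hne)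
  obtain ⟨n, hn⟩ := exists_nat_gt (2 * D / |φ (x * y * x⁻¹) - φ y|)
  linarith [hbound n, (div_lt_iff₀ hpos).mp hn]

theorem abs_map_commutatorElement_le (hφ : IsQuasimorphism φ D) (hhom : IsHomogeneous φ)
    (a b : G) : |φ ⁅a, b⁆| ≤ D := by
  simpa [commutatorElement_def, hφ.map_conj hhom, hhom.map_inv] using hφ (a * b * a⁻¹) b⁻¹

theorem abs_map_list_prod_le (hφ : IsQuasimorphism φ D) (h1 : φ 1 = 0) {C : ℝ} :
    ∀ l : List G, (∀ a ∈ l, |φ a| ≤ C) → |φ l.prod| ≤ l.length * (C + D)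
  | [], _ => by simp [h1]
  | a :: l, hC => by
    have ha := hC a List.mem_cons_self
    have hl := hφ.abs_map_list_prod_le h1 l fun b hb => hC b (List.mem_cons_of_mem a hb)
    have hmul := hφ.abs_map_mul_le a l.prod
    rw [List.prod_cons, List.length_cons, Nat.cast_succ]
    linarith

theorem abs_map_le_of_mem_clSet (hφ : IsQuasimorphism φ D) (hhom : IsHomogeneous φ)
    {g : G} {k : ℕ} (hk : k ∈ clSet g) : |φ g| ≤ 2 * k * D := by
  obtain ⟨l, rfl, rfl⟩ := hk
  have h := hφ.abs_map_list_prod_le hhom.map_one (l.map fun p => ⁅p.1, p.2⁆) (C := D)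
    (by
      simp only [List.mem_map]
      rintro _ ⟨p, -, rfl⟩
      exact hφ.abs_map_commutatorElement_le hhom p.1 p.2)
  rw [List.length_map] at h
  linarith

end IsQuasimorphism

theorem clSet_nonempty {g : G} (hg : g ∈ commutator G) : (clSet g).Nonempty := by
  rw [commutator_eq_closure] at hg
  induction hg using Subgroup.closure_induction'' with
  | mem x hx =>
    obtain ⟨a, b, rfl⟩ := hx
    exact ⟨1, [(a, b)], rfl, by simp⟩
  | inv_mem x hx =>
    obtain ⟨a, b, rfl⟩ := hx
    exact ⟨1, [(b, a)], rfl, by simp [commutatorElement_inv]⟩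
  | one => exact ⟨0, [], rfl, rfl⟩
  | mul x y _ _ hx hy =>
    obtain ⟨m, l, rfl, rfl⟩ := hx
    obtain ⟨n, l', rfl, rfl⟩ := hy
    exact ⟨_, l ++ l', rfl, by simp⟩

theorem cl_mem_clSet {g : G} (hg : g ∈ commutator G) : cl g ∈ clSet g :=
  Nat.sInf_mem (clSet_nonempty hg)

end

theorem bavard_easy_direction
    {G : Type*} [Group G] (g : G)
    (hg : g ∈ commutator G)
    (φ : G → ℝ) (D : ℝ)
    (hD : ∀ x y : G, |φ x + φ y - φ (x * y)| ≤ D)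
    (hhom : ∀ (x : G) (n : ℤ), φ (x ^ n) = n * φ x)
    (s : ℝ)
    (hs : Tendsto (fun n : ℕ => (cl (g ^ n) : ℝ) / n) atTop (𝓝 s)) :
    |φ g| ≤ 2 * D * s := by
  have hquasi : IsQuasimorphism φ D := hD
  have hhomog : IsHomogeneous φ := hhom
  refine ge_of_tendsto (hs.const_mul (2 * D)) ?_
  filter_upwards [eventually_gt_atTop 0] with n hn
  have hbound := hquasi.abs_map_le_of_mem_clSet hhomog (cl_mem_clSet (Subgroup.pow_mem _ hg n))
  rw [hhomog.map_pow, abs_mul, Nat.abs_cast] at hbound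
  rw [mul_div_assoc', le_div_iff₀ (by exact_mod_cast hn)]
  linarith
end

section
/- Let G be a torsion-free group that is virtually cyclic. Then G is cyclic. -/
/-!
Replace the cyclic subgroup by its normal core `⟨b⟩`. Conjugation acts on `⟨b⟩` by `b ↦ b` or
`b ↦ b⁻¹`; if `g` inverts `b`, then `g ^ [G : ⟨b⟩] = b ^ j` is fixed by conjugation by `g`, so
`b ^ j = b ^ (-j)`, forcing `g ^ [G : ⟨b⟩] = 1` and `g = 1`. Hence `b` is central, the center has
finite index, and the transfer `g ↦ g ^ [G : Z(G)]` into the center is injective, so `G` is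
abelian. In a torsion-free abelian group `g ↦ g ^ [G : H]` embeds `G` into the cyclic group `H`.
-/

open Subgroup

section

variable {G : Type*} [Group G]

lemma eq_one_of_pow_eq_one (htf : ∀ g : G, g ≠ 1 → ¬IsOfFinOrder g) {g : G} {n : ℕ} (hn : n ≠ 0)
    (h : g ^ n = 1) : g = 1 :=
  of_not_not fun hg ↦ htf g hg (isOfFinOrder_iff_pow_eq_one.mpr ⟨n, Nat.pos_of_ne_zero hn, h⟩)

lemma conj_eq_self_or_inv_of_zpowers_normal {b : G} (hb : ¬IsOfFinOrder b) [(zpowers b).Normal]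
    (g : G) : g * b * g⁻¹ = b ∨ g * b * g⁻¹ = b⁻¹ := by
  obtain ⟨m, hm⟩ := mem_zpowers_iff.mp (Normal.conj_mem ‹_› b (mem_zpowers b) g)
  obtain ⟨n, hn⟩ := mem_zpowers_iff.mp (Normal.conj_mem ‹_› b (mem_zpowers b) g⁻¹)
  rw [inv_inv] at hn
  have hnm : b ^ (n * m) = b ^ (1 : ℤ) := by
    calc b ^ (n * m) = MulAut.conj g⁻¹ (b ^ m) := by simp [zpow_mul, hn, map_zpow]
      _ = b ^ (1 : ℤ) := by rw [hm]; simp [mul_assoc]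
  rcases Int.eq_one_or_neg_one_of_mul_eq_one' (injective_zpow_iff_not_isOfFinOrder.mpr hb hnm)
    with ⟨-, rfl⟩ | ⟨-, rfl⟩
  · simp [← hm]
  · simp [← hm]

lemma mem_center_of_zpowers_normal_of_finiteIndex (htf : ∀ g : G, g ≠ 1 → ¬IsOfFinOrder g) {b : G}
    [(zpowers b).Normal] [(zpowers b).FiniteIndex] : b ∈ center G := by
  by_cases hb1 : b = 1
  · exact hb1 ▸ (center G).one_mem
  refine mem_center_iff.mpr fun g ↦ ?_
  rcases conj_eq_self_or_inv_of_zpowers_normal (htf b hb1) g with hfix | hinv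
  · exact mul_inv_eq_iff_eq_mul.mp hfix
  suffices g = 1 by simp [this]
  obtain ⟨j, hj⟩ := mem_zpowers_iff.mp ((zpowers b).pow_index_mem g)
  have hj0 : j = 0 := by
    have : b ^ (-j) = b ^ j := by
      calc b ^ (-j) = MulAut.conj g (b ^ j) := by simp [map_zpow, hinv]
        _ = b ^ j := by rw [hj, MulAut.conj_apply, (Commute.self_pow g _).eq, mul_inv_cancel_right]
    have := injective_zpow_iff_not_isOfFinOrder.mpr (htf b hb1) this
    omega
  exact eq_one_of_pow_eq_one htf FiniteIndex.index_ne_zero (by rw [← hj, hj0, zpow_zero])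

lemma mul_comm_of_center_finiteIndex (htf : ∀ g : G, g ≠ 1 → ¬IsOfFinOrder g)
    [(center G).FiniteIndex] (x y : G) : x * y = y * x := by
  have hinj : Function.Injective (MonoidHom.transferCenterPow G) :=
    (injective_iff_map_eq_one _).mpr fun g hg ↦ eq_one_of_pow_eq_one htf FiniteIndex.index_ne_zero
      (by simpa [MonoidHom.transferCenterPow_apply] using congrArg Subtype.val hg)
  refine hinj ?_
  rw [map_mul, map_mul]
  exact Subtype.ext (mem_center_iff.mp (MonoidHom.transferCenterPow G y).2 _)

end

lemma isCyclic_of_isCyclic_subgroup_of_finiteIndex {A : Type*} [CommGroup A] [IsMulTorsionFree A]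
    (H : Subgroup A) [IsCyclic H] [H.FiniteIndex] : IsCyclic A :=
  isCyclic_of_injective ((powMonoidHom H.index).codRestrict H H.pow_index_mem)
    fun _ _ h ↦ pow_left_injective FiniteIndex.index_ne_zero (congrArg Subtype.val h)

theorem torsion_free_virtually_cyclic_is_cyclic
    {G : Type*} [Group G]
    (htf : ∀ g : G, g ≠ 1 → ¬IsOfFinOrder g)
    (hvc : ∃ H : Subgroup G, IsCyclic H ∧ H.FiniteIndex) :
    IsCyclic G := by
  obtain ⟨H, hHcyc, hHfi⟩ := hvc
  obtain ⟨b, hb⟩ :=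
    H.normalCore.isCyclic_iff_exists_zpowers_eq_top.mp (isCyclic_of_le H.normalCore_le)
  have : (zpowers b).Normal := hb ▸ H.normalCore_normal
  have : (zpowers b).FiniteIndex := hb ▸ finiteIndex_normalCore H
  have : (center G).FiniteIndex :=
    finiteIndex_of_le (zpowers_le.mpr (mem_center_of_zpowers_normal_of_finiteIndex htf (b := b)))
  let : CommGroup G := { mul_comm := mul_comm_of_center_finiteIndex htf }
  have : IsMulTorsionFree G := .of_not_isOfFinOrder htf
  exact isCyclic_of_isCyclic_subgroup_of_finiteIndex H
end

section
/- Let G be a ℚ-group (every element has a unique k-th root for every k ≥ 1), let F be a free group on m generators x_1,…,x_m, and let w ∈ F with w ∉ [F,F]. Then the word map w : G^m → G, obtained by substituting group elements for the generators, is surjective. -/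
/-!
Let `i_k` be the exponent sum of the generator `x_k` in `w`; since `w ∉ [F, F]`, some `i_k ≠ 0`.
Substituting `h` for `x_k` and `1` for every other generator sends `w` to `h ^ i_k`, and in a
ℚ-group every element is an `i_k`-th power.
-/

open Function

theorem Group.surjective_zpow_of_surjective_pow {G : Type*} [Group G]
    (H : ∀ {n : ℕ}, n ≠ 0 → Surjective fun a : G => a ^ n) {n : ℤ} (hn : n ≠ 0) :
    Surjective fun a : G => a ^ n :=
  letI := rootableByOfPowLeftSurj G ℕ H
  letI := Group.rootableByIntOfRootableByNat G
  RootableBy.surjective_pow G ℤ hn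

namespace FreeGroup

variable {α : Type*}

/-- `FreeAbelianGroup α` is by definition `Additive (Abelianization (FreeGroup α))`. -/
noncomputable def exponentSum (k : α) (w : FreeGroup α) : ℤ :=
  FreeAbelianGroup.coeff k (Additive.ofMul (Abelianization.of w) : FreeAbelianGroup α)

theorem exists_exponentSum_ne_zero {w : FreeGroup α} (hw : w ∉ commutator (FreeGroup α)) :
    ∃ k, exponentSum k w ≠ 0 := by
  have hne : (Additive.ofMul (Abelianization.of w) : FreeAbelianGroup α) ≠ 0 := by
    rwa [Ne, ofMul_eq_zero, ← MonoidHom.mem_ker, Abelianization.ker_of]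
  obtain ⟨k, hk⟩ := FreeAbelianGroup.nonempty_support_iff.2 hne
  exact ⟨k, (FreeAbelianGroup.mem_support_iff k _).1 hk⟩

theorem lift_mulSingle_apply {G : Type*} [Group G] [DecidableEq α] (k : α) (g : G)
    (w : FreeGroup α) : lift (Pi.mulSingle k g) w = g ^ exponentSum k w := by
  have hom_eq : lift (Pi.mulSingle k g) =
      (zpowersHom G g).comp ((FreeAbelianGroup.coeff k).toMultiplicative.comp Abelianization.of) := by
    ext j
    rw [lift_apply_of]
    change _ = g ^ FreeAbelianGroup.coeff k (FreeAbelianGroup.of j)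
    rcases eq_or_ne j k with rfl | hj <;> simp [*, FreeAbelianGroup.coeff]
  exact DFunLike.congr_fun hom_eq w

end FreeGroup

theorem word_map_surjective_on_Q_group
    {G : Type*} [Group G]
    (hQ : ∀ g : G, ∀ k : ℕ, 1 ≤ k → ∃! h : G, h ^ k = g)
    (m : ℕ) (w : FreeGroup (Fin m))
    (hw : w ∉ commutator (FreeGroup (Fin m))) :
    ∀ g : G, ∃ v : Fin m → G, FreeGroup.lift v w = g := by
  intro g
  obtain ⟨k, hk⟩ := FreeGroup.exists_exponentSum_ne_zero hw
  have hpow : ∀ {n : ℕ}, n ≠ 0 → Surjective fun a : G => a ^ n :=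
    fun hn g => (hQ g _ (Nat.one_le_iff_ne_zero.2 hn)).exists
  obtain ⟨h, rfl⟩ := Group.surjective_zpow_of_surjective_pow hpow hk g
  exact ⟨Pi.mulSingle k h, FreeGroup.lift_mulSingle_apply k h w⟩
end

section
/- Let P = G₁ *_Z G₂ be an amalgamated free product of torsion-free groups where Z is malnormal in G₁ (i.e. Z ∩ gZg⁻¹ = {e} for all g ∈ G₁ \ Z). Then the stabilizer in P of any path of length 3 in the Bass–Serre tree of the splitting is trivial. -/
/-- The December 2024 Mathlib definition of `Monoid.IsTorsionFree` (removed since). -/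
def Monoid.IsTorsionFree (G : Type*) [Monoid G] : Prop :=
  ∀ g : G, g ≠ 1 → ¬IsOfFinOrder g



private def BSfam (G₁ G₂ : Type) : Bool → Type :=
  fun i => match i with | true => G₁ | false => G₂

private instance BSfam.group (G₁ G₂ : Type) [Group G₁] [Group G₂] :
    ∀ i, Group (BSfam G₁ G₂ i) :=
  fun i => match i with | true => ‹Group G₁› | false => ‹Group G₂›

private def BSphi {Z G₁ G₂ : Type} [Group Z] [Group G₁] [Group G₂]
    (d₁ : Z →* G₁) (d₂ : Z →* G₂) : ∀ i, Z →* BSfam G₁ G₂ i :=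
  fun i => match i with | true => d₁ | false => d₂

/-- In the amalgamated product `P = G₁ *_Z G₂` (encoded via its universal property,
with injective edge maps `d₁ : Z → G₁` and `d₂ : Z → G₂`), with `G₁, G₂` torsion-free
and `Z` malnormal in `G₁`, the stabiliser of any path of length 3 in the Bass–Serre
tree is trivial.  Since `P` acts transitively on edges, a reduced path of length 3
has middle edge (a translate of) the base edge `Z`, and its outer edges are `a·Z`
and `b·Z` with `a ∈ G₁ \ Z`, `b ∈ G₂ \ Z`; its pointwise stabiliser is
`j₁(d₁(Z)) ∩ j₁(a)·j₁(d₁(Z))·j₁(a)⁻¹ ∩ j₂(b)·j₂(d₂(Z))·j₂(b)⁻¹`. -/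
theorem bass_serre_path3_stabilizer_trivial
    (Z G₁ G₂ P : Type) [Group Z] [Group G₁] [Group G₂] [Group P]
    (d₁ : Z →* G₁) (d₂ : Z →* G₂) (j₁ : G₁ →* P) (j₂ : G₂ →* P)
    (hd₁ : Function.Injective d₁) (hd₂ : Function.Injective d₂)
    (hcomm : ∀ z : Z, j₁ (d₁ z) = j₂ (d₂ z))
    -- `P` is the pushout (amalgamated free product) of `G₁ ← Z → G₂`:
    (huniv : ∀ (H : Type) [Group H] (f₁ : G₁ →* H) (f₂ : G₂ →* H),
      (∀ z : Z, f₁ (d₁ z) = f₂ (d₂ z)) →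
      ∃! F : P →* H, F.comp j₁ = f₁ ∧ F.comp j₂ = f₂)
    -- torsion-freeness:
    (htf₁ : Monoid.IsTorsionFree G₁) (htf₂ : Monoid.IsTorsionFree G₂)
    -- malnormality of `Z` in `G₁`:
    (hmal : ∀ g : G₁, g ∉ d₁.range →
      ∀ z z' : Z, g * d₁ z * g⁻¹ = d₁ z' → z = 1) :
    ∀ a : G₁, a ∉ d₁.range → ∀ b : G₂, b ∉ d₂.range →
      ∀ p : P,
        p ∈ (d₁.range.map j₁) →
        p ∈ (d₁.range.map j₁).map (MulAut.conj (j₁ a)).toMonoidHom →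
        p ∈ (d₂.range.map j₂).map (MulAut.conj (j₂ b)).toMonoidHom →
        p = 1 := by
  intro a ha b hb p hp1 hp2 hp3
  classical
  -- First, `j₁` is injective, via the concrete pushout `Monoid.PushoutI`.
  have hj₁ : Function.Injective j₁ := by
    let φ := BSphi d₁ d₂
    have hφ : ∀ i, Function.Injective (φ i) := by
      intro i; cases i
      · exact hd₂
      · exact hd₁
    obtain ⟨F, ⟨hF1, _⟩, _⟩ := huniv (Monoid.PushoutI φ)
      (Monoid.PushoutI.of (φ := φ) true) (Monoid.PushoutI.of (φ := φ) false)
      (fun z =>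
        (Monoid.PushoutI.of_apply_eq_base (φ := φ) true z).trans
          (Monoid.PushoutI.of_apply_eq_base (φ := φ) false z).symm)
    have hinj : Function.Injective (Monoid.PushoutI.of (φ := φ) true) :=
      Monoid.PushoutI.of_injective hφ true
    intro x y hxy
    have : F (j₁ x) = F (j₁ y) := by rw [hxy]
    rw [← MonoidHom.comp_apply, ← MonoidHom.comp_apply, hF1] at this
    exact hinj this
  -- Unpack the membership hypotheses.
  obtain ⟨g, ⟨z, hz⟩, hg⟩ := hp1
  obtain ⟨q, ⟨g', ⟨z', hz'⟩, hg'⟩, hq⟩ := hp2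
  subst hz hz' hg'
  simp only [MulEquiv.toMonoidHom_eq_coe, MonoidHom.coe_coe, MulAut.conj_apply] at hq
  -- `j₁ (d₁ z) = j₁ (a * d₁ z' * a⁻¹)`, so by injectivity and malnormality `z' = 1`.
  have hPeq : j₁ (d₁ z) = j₁ (a * d₁ z' * a⁻¹) := by
    rw [hg, ← hq]; simp [map_mul, map_inv]
  have hG₁eq : a * d₁ z' * a⁻¹ = d₁ z := (hj₁ hPeq).symm
  have hz'1 : z' = 1 := hmal a ha z' z hG₁eq
  rw [← hq, hz'1]
  simp
end
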